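/- arXiv:2410.01951 — 7 statements merged into one kernel-verified Lean document; each statement's English description precedes it below -/
import Mathlib

section
/- In the coin game played on K coins with positions tracked by an order statistic posc, suppose between rounds t and t' Eve never chooses a set containing the coin currently in rank i+1. Then posc_{t'}(i+1) ≤ max{ posc_t(i+1), posc_t(i) + (t' - t) }. -/
/-- `posc p i` is the `i`-th smallest (1-indexed) value among coin positions `p`. -/
def posc {K : ℕ} (p : Fin K → ℕ) (i : ℕ) : ℕ :=
  ((List.ofFn p).mergeSort (fun a b => decide (a ≤ b))).getD (i-1) 0
/-- `coinc hK p i` is the coin occupying rank `i` (1-indexed) among positions `p`,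
with ties broken by coin index. -/
def coinc {K : ℕ} (hK : 0 < K) (p : Fin K → ℕ) (i : ℕ) : Fin K :=
  ((List.finRange K).mergeSort
    (fun a b => decide (p a < p b ∨ (p a = p b ∧ a ≤ b)))).getD (i-1) ⟨0, hK⟩
/-- A coin-game trajectory: all coins start at 0 and each round some set of coins
(one side of Bob's partition, as chosen by Eve) moves up by 1. -/
def IsCoinGame {K : ℕ} (pos : ℕ → Fin K → ℕ) : Prop :=
  (∀ x, pos 0 x = 0) ∧
  ∀ t, ∃ S : Finset (Fin K), ∀ x, pos (t+1) x = pos t x + (if x ∈ S then 1 else 0)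

namespace CoinAux
variable {K : ℕ} (p : Fin K → ℕ)

def cl (p : Fin K → ℕ) : List (Fin K) :=
  (List.finRange K).mergeSort (fun a b => decide (p a < p b ∨ (p a = p b ∧ a ≤ b)))

lemma cl_perm : List.Perm (cl p) (List.finRange K) := List.mergeSort_perm _ _

lemma cl_length : (cl p).length = K := by
  rw [(cl_perm p).length_eq, List.length_finRange]

lemma cl_nodup : (cl p).Nodup := (cl_perm p).nodup_iff.mpr (List.nodup_finRange K)

lemma cl_sorted : (cl p).Pairwise (fun a b => p a ≤ p b) := by
  have h := List.pairwise_mergeSort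
    (le := fun a b : Fin K => decide (p a < p b ∨ (p a = p b ∧ a ≤ b)))
    (by intro a b c hab hbc
        simp only [decide_eq_true_eq] at *
        rcases hab with h1 | ⟨h1, h1'⟩ <;> rcases hbc with h2 | ⟨h2, h2'⟩ <;>
          [left; left; left; right] <;> omega)
    (by intro a b
        simp only [Bool.or_eq_true, decide_eq_true_eq]
        rcases lt_trichotomy (p a) (p b) with h | h | h
        · exact Or.inl (Or.inl h)
        · rcases le_total a b with h' | h'
          · exact Or.inl (Or.inr ⟨h, h'⟩)
          · exact Or.inr (Or.inr ⟨h.symm, h'⟩)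
        · exact Or.inr (Or.inl h))
    (List.finRange K)
  refine h.imp ?_
  intro a b hab
  simp only [decide_eq_true_eq] at hab
  rcases hab with h | ⟨h, _⟩ <;> omega

lemma cl_sorted_get {r s : ℕ} (hr : r ≤ s) (hs : s < K) :
    p ((cl p)[r]'(by rw [cl_length]; omega)) ≤ p ((cl p)[s]'(by rw [cl_length]; omega)) := by
  rcases eq_or_lt_of_le hr with rfl | h
  · exact le_refl _
  · exact List.pairwise_iff_getElem.mp (cl_sorted p) r s _ _ h

lemma map_cl : (List.ofFn p).mergeSort (fun a b => decide (a ≤ b)) = (cl p).map p := by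
  refine (fun hp h1 h2 => List.Perm.eq_of_pairwise' (r := (· ≤ ·)) h1 h2 hp) ?_ ?_ ?_
  · refine ((List.mergeSort_perm _ _).trans ?_).trans ((cl_perm p).map p).symm
    rw [List.ofFn_eq_map]
  · have := List.pairwise_mergeSort (le := fun a b : ℕ => decide (a ≤ b))
      (by intros; simp_all; omega) (by intros; simp; omega) (List.ofFn p)
    exact this.imp (by simp)
  · exact (List.pairwise_map).mpr (cl_sorted p)

lemma posc_eq (j : ℕ) (h1 : 1 ≤ j) (hj : j ≤ K) :
    posc p j = p ((cl p)[j-1]'(by rw [cl_length]; omega)) := by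
  have hlen : j - 1 < ((cl p).map p).length := by
    rw [List.length_map, cl_length]; omega
  rw [posc, map_cl, List.getD_eq_getElem _ _ hlen, List.getElem_map]

lemma coinc_eq (hK : 0 < K) (j : ℕ) (hj : j ≤ K) (h1 : 1 ≤ j) :
    coinc hK p j = (cl p)[j-1]'(by rw [cl_length]; omega) := by
  rw [coinc, List.getD_eq_getElem]
  rfl

lemma posc_coinc (hK : 0 < K) (j : ℕ) (h1 : 1 ≤ j) (hj : j ≤ K) :
    p (coinc hK p j) = posc p j := by
  rw [coinc_eq p hK j hj h1, posc_eq p j h1 hj]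

lemma count_le_posc (j : ℕ) (h1 : 1 ≤ j) (hj : j ≤ K) :
    j ≤ (Finset.univ.filter fun x => p x ≤ posc p j).card := by
  classical
  have hsub : ((cl p).take j).toFinset ⊆ Finset.univ.filter fun x => p x ≤ posc p j := by
    intro x hx
    rw [List.mem_toFinset] at hx
    obtain ⟨r, hr, rfl⟩ := List.mem_iff_getElem.mp hx
    have hr' : r < j := by
      have := hr; rw [List.length_take, cl_length] at this; omega
    rw [List.getElem_take]
    simp only [Finset.mem_filter, Finset.mem_univ, true_and]
    rw [posc_eq p j h1 hj]
    exact cl_sorted_get p (by omega) (by omega)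
  calc j = ((cl p).take j).toFinset.card := by
            rw [List.toFinset_card_of_nodup ((cl_nodup p).sublist (List.take_sublist _ _)),
              List.length_take, cl_length]
            omega
    _ ≤ _ := Finset.card_le_card hsub

lemma posc_le_of_count (j v : ℕ) (h1 : 1 ≤ j) (hj : j ≤ K)
    (h : j ≤ (Finset.univ.filter fun x => p x ≤ v).card) : posc p j ≤ v := by
  classical
  by_contra hlt
  push_neg at hlt
  rw [posc_eq p j h1 hj] at hlt
  have hsub : (Finset.univ.filter fun x => p x ≤ v) ⊆ ((cl p).take (j-1)).toFinset := by
    intro x hx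
    simp only [Finset.mem_filter, Finset.mem_univ, true_and] at hx
    have hxmem : x ∈ cl p := (cl_perm p).mem_iff.mpr (List.mem_finRange x)
    obtain ⟨r, hr, rfl⟩ := List.mem_iff_getElem.mp hxmem
    have hrK : r < K := by rwa [cl_length] at hr
    have hrj : r < j - 1 := by
      by_contra hge
      push_neg at hge
      have := cl_sorted_get p (r := j-1) (s := r) hge hrK
      omega
    rw [List.mem_toFinset]
    apply List.mem_iff_getElem.mpr
    exact ⟨r, by rw [List.length_take, cl_length]; omega, by rw [List.getElem_take]⟩
  have := Finset.card_le_card hsub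
  have hcard : ((cl p).take (j-1)).toFinset.card ≤ j - 1 :=
    (List.toFinset_card_le _).trans (by rw [List.length_take, cl_length]; omega)
  omega

end CoinAux

namespace CoinAux
variable {K : ℕ}

lemma step_mono (q q' : Fin K → ℕ) (hstep : ∀ x, q' x ≤ q x + 1)
    (j : ℕ) (h1 : 1 ≤ j) (hj : j ≤ K) :
    posc q' j ≤ posc q j + 1 := by
  classical
  apply posc_le_of_count q' j _ h1 hj
  refine le_trans (count_le_posc q j h1 hj) (Finset.card_le_card ?_)
  intro x hx
  simp only [Finset.mem_filter, Finset.mem_univ, true_and] at hx ⊢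
  have := hstep x
  omega

lemma step_key (hK : 0 < K) (q q' : Fin K → ℕ) (hstep : ∀ x, q' x ≤ q x + 1)
    (i : ℕ) (h1 : 1 ≤ i) (hiK : i + 1 ≤ K)
    (hfix : q' (coinc hK q (i+1)) = q (coinc hK q (i+1))) :
    posc q' (i+1) ≤ max (posc q (i+1)) (posc q i + 1) := by
  classical
  set c := coinc hK q (i+1) with hc
  have hqc : q c = posc q (i+1) := posc_coinc q hK (i+1) (by omega) hiK
  apply posc_le_of_count q' (i+1) _ (by omega) hiK
  by_cases hcase : posc q (i+1) ≤ posc q i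
  · refine le_trans (count_le_posc q (i+1) (by omega) hiK) (Finset.card_le_card ?_)
    intro x hx
    simp only [Finset.mem_filter, Finset.mem_univ, true_and] at hx ⊢
    have := hstep x
    omega
  · push_neg at hcase
    have hA : i ≤ (Finset.univ.filter fun x => q x ≤ posc q i).card :=
      count_le_posc q i h1 (by omega)
    have hcA : c ∉ (Finset.univ.filter fun x => q x ≤ posc q i) := by
      simp only [Finset.mem_filter, Finset.mem_univ, true_and]
      omega
    have hsub : insert c (Finset.univ.filter fun x => q x ≤ posc q i) ⊆
        Finset.univ.filter fun x => q' x ≤ max (posc q (i+1)) (posc q i + 1) := by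
      intro x hx
      rcases Finset.mem_insert.mp hx with rfl | hx
      · simp only [Finset.mem_filter, Finset.mem_univ, true_and]
        omega
      · simp only [Finset.mem_filter, Finset.mem_univ, true_and] at hx ⊢
        have := hstep x
        omega
    calc i + 1 = i + 1 := rfl
      _ ≤ (insert c (Finset.univ.filter fun x => q x ≤ posc q i)).card := by
          rw [Finset.card_insert_of_notMem hcA]; omega
      _ ≤ _ := Finset.card_le_card hsub

end CoinAux

/-- if between rounds `t` and `t'` the set of coins that moves up never
contains the coin currently occupying rank `i+1`, then
`posc_{t'}(i+1) ≤ max (posc_t(i+1)) (posc_t(i) + (t' - t))`. -/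
theorem stmt2 (K : ℕ) (hK : 0 < K) (pos : ℕ → Fin K → ℕ)
    (h0 : ∀ x, pos 0 x = 0)
    (S : ℕ → Finset (Fin K))
    (hstep : ∀ s x, pos (s+1) x = pos s x + (if x ∈ S s then 1 else 0))
    (i : ℕ) (hi1 : 1 ≤ i) (hiK : i + 1 ≤ K) (t t' : ℕ) (htt' : t ≤ t')
    (hnever : ∀ s, t ≤ s → s < t' → coinc hK (pos s) (i+1) ∉ S s) :
    posc (pos t') (i+1) ≤ max (posc (pos t) (i+1)) (posc (pos t) i + (t' - t)) := by
  have hstep1 : ∀ s x, pos (s+1) x ≤ pos s x + 1 := by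
    intro s x; rw [hstep]; split <;> omega
  have main : ∀ s, t ≤ s → s ≤ t' →
      posc (pos s) i ≤ posc (pos t) i + (s - t) ∧
      posc (pos s) (i+1) ≤ max (posc (pos t) (i+1)) (posc (pos t) i + (s - t)) := by
    intro s hs
    induction s, hs using Nat.le_induction with
    | base => intro _; simp
    | succ s hs ih =>
      intro hs'
      obtain ⟨ih1, ih2⟩ := ih (by omega)
      constructor
      · have := CoinAux.step_mono (pos s) (pos (s+1)) (hstep1 s) i hi1 (by omega)
        have : s + 1 - t = (s - t) + 1 := by omega
        omega
      · have hkey := CoinAux.step_key hK (pos s) (pos (s+1)) (hstep1 s) i hi1 hiK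
          (by rw [hstep, if_neg (hnever s hs (by omega))]; omega)
        have heq : s + 1 - t = (s - t) + 1 := by omega
        rw [heq]
        refine le_trans hkey ?_
        simp only [max_le_iff] at *
        omega
  exact (main t' htt' le_rfl).2
end

section
/- For any ε > 0 and all sufficiently large n: consider an n-round coin game on K = 3 coins in which m rounds have already been played. Eve has a strategy for the remaining n - m rounds guaranteeing that the second smallest final position satisfies posc_n(2) ≤ max{ ceil((n - m + posc_m(1) + posc_m(2) + posc_m(3)) / 3), posc_m(2) }. -/
/-- Positions after playing the coin game from initial positions `p0`,
where Bob's strategy `B` maps the history of Eve's choices to a set of coins,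
and Eve's choice sequence `e` selects Bob's set (`true`) or its complement (`false`);
the coins of the selected set each move up by 1. -/
def play {K : ℕ} (p0 : Fin K → ℕ) (B : List Bool → Finset (Fin K)) (e : ℕ → Bool) :
    ℕ → Fin K → ℕ
  | 0 => p0
  | t+1 => fun x =>
      play p0 B e t x +
        (if x ∈ (if e t then B ((List.range t).map e) else (B ((List.range t).map e))ᶜ)
         then 1 else 0)

def wcoin (θ v : ℕ) : ℕ := if θ < v then 0 else if v = θ then 3 else 2

def cost (θ : ℕ) (p : Fin 3 → ℕ) (X : Finset (Fin 3)) : ℕ :=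
  (if (0 : Fin 3) ∈ X then wcoin θ (p 0) else 0) +
  (if (1 : Fin 3) ∈ X then wcoin θ (p 1) else 0) +
  (if (2 : Fin 3) ∈ X then wcoin θ (p 2) else 0)

def ch (θ : ℕ) (p : Fin 3 → ℕ) (S : Finset (Fin 3)) : Bool :=
  decide (cost θ p S ≤ cost θ p Sᶜ)

def Hc (θ : ℕ) (p : Fin 3 → ℕ) : ℕ :=
  (if θ < p 0 then 1 else 0) + (if θ < p 1 then 1 else 0) + (if θ < p 2 then 1 else 0)

def Phi (θ : ℕ) (p : Fin 3 → ℕ) : ℕ := min (p 0) (θ+1) + min (p 1) (θ+1) + min (p 2) (θ+1)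

set_option maxHeartbeats 1000000 in
lemma core (θ a b c : ℕ) (ma mb mc : Bool)
    (wa wb wc : ℕ)
    (hwa : wa = if θ < a then 0 else if a = θ then 3 else 2)
    (hwb : wb = if θ < b then 0 else if b = θ then 3 else 2)
    (hwc : wc = if θ < c then 0 else if c = θ then 3 else 2)
    (hb : (cond ma wa 0) + (cond mb wb 0) + (cond mc wc 0) ≤
          (cond ma 0 wa) + (cond mb 0 wb) + (cond mc 0 wc))
    (h1 : (if θ < a then 1 else 0) + (if θ < b then 1 else 0) + (if θ < c then 1 else 0) ≤ 1)
    (h2 : min a (θ+1) + min b (θ+1) + min c (θ+1) + 1 ≤ 3*θ) :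
    (if θ < a + cond ma 1 0 then 1 else 0) + (if θ < b + cond mb 1 0 then 1 else 0) +
      (if θ < c + cond mc 1 0 then 1 else 0) ≤ 1 ∧
    min (a + cond ma 1 0) (θ+1) + min (b + cond mb 1 0) (θ+1) + min (c + cond mc 1 0) (θ+1) ≤
      min a (θ+1) + min b (θ+1) + min c (θ+1) + 1 := by
  cases ma <;> cases mb <;> cases mc <;>
    simp only [cond] at hb ⊢ <;>
    split_ifs at * <;> omega

lemma step (θ : ℕ) (p : Fin 3 → ℕ) (S : Finset (Fin 3))
    (h1 : Hc θ p ≤ 1) (h2 : Phi θ p + 1 ≤ 3*θ)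
    (q : Fin 3 → ℕ)
    (hq : ∀ x, q x = p x + (if x ∈ (if ch θ p S then S else Sᶜ) then 1 else 0)) :
    Hc θ q ≤ 1 ∧ Phi θ q ≤ Phi θ p + 1 := by
  set X := if ch θ p S then S else Sᶜ with hX
  have hcost : cost θ p X ≤ cost θ p Xᶜ := by
    rw [hX]
    by_cases hb : cost θ p S ≤ cost θ p Sᶜ
    · simp [ch, hb]
    · simp only [ch, decide_eq_true_eq, if_neg hb, compl_compl]
      omega
  have hq0 := hq 0; have hq1 := hq 1; have hq2 := hq 2
  have hc : ∀ i : Fin 3, (if i ∈ X then 1 else 0) = cond (decide (i ∈ X)) 1 0 := by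
    intro i; by_cases h : i ∈ X <;> simp [h]
  unfold cost at hcost
  have hcost' : (cond (decide ((0:Fin 3) ∈ X)) (wcoin θ (p 0)) 0) +
      (cond (decide ((1:Fin 3) ∈ X)) (wcoin θ (p 1)) 0) +
      (cond (decide ((2:Fin 3) ∈ X)) (wcoin θ (p 2)) 0) ≤
      (cond (decide ((0:Fin 3) ∈ X)) 0 (wcoin θ (p 0))) +
      (cond (decide ((1:Fin 3) ∈ X)) 0 (wcoin θ (p 1))) +
      (cond (decide ((2:Fin 3) ∈ X)) 0 (wcoin θ (p 2))) := by
    by_cases h0 : (0:Fin 3) ∈ X <;> by_cases h1 : (1:Fin 3) ∈ X <;>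
      by_cases h2 : (2:Fin 3) ∈ X <;>
      simp only [h0, h1, h2, decide_true, decide_false, Bool.cond_true, Bool.cond_false,
        decide_eq_true_eq, cond] <;>
      simp only [h0, h1, h2, Finset.mem_compl, not_true, not_false_iff, if_true, if_false,
        if_neg, if_pos] at hcost <;> omega
  have := core θ (p 0) (p 1) (p 2) (decide ((0:Fin 3) ∈ X)) (decide ((1:Fin 3) ∈ X))
    (decide ((2:Fin 3) ∈ X)) (wcoin θ (p 0)) (wcoin θ (p 1)) (wcoin θ (p 2))
    rfl rfl rfl hcost' h1 h2
  unfold Hc Phi at *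
  rw [hq0, hq1, hq2, hc 0, hc 1, hc 2]
  exact this

lemma shape3 (p : Fin 3 → ℕ) : ∃ x y z : ℕ,
    (List.ofFn p).mergeSort (fun a b => decide (a ≤ b)) = [x, y, z] ∧
    x ≤ y ∧ y ≤ z ∧ ([x,y,z] : List ℕ).Perm [p 0, p 1, p 2] := by
  have hofn : List.ofFn p = [p 0, p 1, p 2] := by simp [List.ofFn_succ]
  set l := (List.ofFn p).mergeSort (fun a b => decide (a ≤ b)) with hl
  have hperm : l.Perm (List.ofFn p) := List.mergeSort_perm _ _
  have hsort : l.Pairwise (fun a b => (decide (a ≤ b)) = true) :=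
    List.pairwise_mergeSort (by intro a b c; simp; omega) (by intro a b; simp; omega) _
  have hlen : l.length = 3 := by rw [hperm.length_eq, hofn]; rfl
  match l, hlen, hsort, hperm with
  | [x, y, z], _, hsort, hperm =>
    refine ⟨x, y, z, rfl, ?_, ?_, by rw [← hofn]; exact hperm⟩
    · have := List.pairwise_cons.1 hsort
      simpa using this.1 y (by simp)
    · have := List.pairwise_cons.1 (List.pairwise_cons.1 hsort).2
      simpa using this.1 z (by simp)

lemma Hc_iff (θ : ℕ) (p : Fin 3 → ℕ) : Hc θ p ≤ 1 ↔ posc p 2 ≤ θ := by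
  obtain ⟨x, y, z, hs, hxy, hyz, hperm⟩ := shape3 p
  have hc := hperm.countP_eq (fun a => decide (θ < a))
  simp only [List.countP_cons, List.countP_nil, decide_eq_true_eq] at hc
  have hposc : posc p 2 = y := by unfold posc; rw [hs]; rfl
  rw [hposc]
  unfold Hc
  constructor <;> intro h <;> split_ifs at * <;> omega

lemma sum_posc (p : Fin 3 → ℕ) :
    p 0 + p 1 + p 2 = posc p 1 + posc p 2 + posc p 3 := by
  obtain ⟨x, y, z, hs, hxy, hyz, hperm⟩ := shape3 p
  have hsum := hperm.sum_eq
  simp only [List.sum_cons, List.sum_nil] at hsum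
  have h1 : posc p 1 = x := by unfold posc; rw [hs]; rfl
  have h2 : posc p 2 = y := by unfold posc; rw [hs]; rfl
  have h3 : posc p 3 = z := by unfold posc; rw [hs]; rfl
  omega

noncomputable def sim (θ : ℕ) (p0 : Fin 3 → ℕ) (B : List Bool → Finset (Fin 3)) :
    ℕ → (Fin 3 → ℕ) × List Bool
  | 0 => (p0, [])
  | t+1 =>
      let q := sim θ p0 B t
      (fun x => q.1 x +
        (if x ∈ (if ch θ q.1 (B q.2) then B q.2 else (B q.2)ᶜ) then 1 else 0),
       q.2 ++ [ch θ q.1 (B q.2)])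

noncomputable def eve (θ : ℕ) (p0 : Fin 3 → ℕ) (B : List Bool → Finset (Fin 3)) :
    ℕ → Bool := fun t => ch θ (sim θ p0 B t).1 (B (sim θ p0 B t).2)

lemma sim_spec (θ : ℕ) (p0 : Fin 3 → ℕ) (B : List Bool → Finset (Fin 3)) :
    ∀ t, (sim θ p0 B t).2 = (List.range t).map (eve θ p0 B) ∧
      (sim θ p0 B t).1 = play p0 B (eve θ p0 B) t := by
  intro t
  induction t with
  | zero => simp [sim, play]
  | succ t ih =>
    obtain ⟨ih2, ih1⟩ := ih
    have he : eve θ p0 B t = ch θ (sim θ p0 B t).1 (B (sim θ p0 B t).2) := rfl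
    constructor
    · show (sim θ p0 B t).2 ++ [ch θ (sim θ p0 B t).1 (B (sim θ p0 B t).2)] = _
      rw [List.range_succ, List.map_append, List.map_singleton, he, ih2]
    · show (fun x => (sim θ p0 B t).1 x + _) = _
      funext x
      show (sim θ p0 B t).1 x + (if x ∈ (if ch θ (sim θ p0 B t).1 (B (sim θ p0 B t).2)
          then B (sim θ p0 B t).2 else (B (sim θ p0 B t).2)ᶜ) then 1 else 0) = _
      rw [show play p0 B (eve θ p0 B) (t+1) x = play p0 B (eve θ p0 B) t x +
        (if x ∈ (if eve θ p0 B t then B ((List.range t).map (eve θ p0 B))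
           else (B ((List.range t).map (eve θ p0 B)))ᶜ) then 1 else 0) from rfl]
      rw [← ih2, ← ih1, he]

lemma invariant (θ T : ℕ) (p0 : Fin 3 → ℕ) (B : List Bool → Finset (Fin 3))
    (hH : Hc θ p0 ≤ 1) (hP : Phi θ p0 + T ≤ 3*θ) :
    ∀ t, t ≤ T → Hc θ (sim θ p0 B t).1 ≤ 1 ∧ Phi θ (sim θ p0 B t).1 + T ≤ 3*θ + t := by
  intro t
  induction t with
  | zero => intro _; exact ⟨hH, by simpa [sim] using hP⟩
  | succ t ih =>
    intro ht
    obtain ⟨ih1, ih2⟩ := ih (by omega)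
    have h2 : Phi θ (sim θ p0 B t).1 + 1 ≤ 3*θ := by omega
    have hq : ∀ x, (sim θ p0 B (t+1)).1 x = (sim θ p0 B t).1 x +
        (if x ∈ (if ch θ (sim θ p0 B t).1 (B (sim θ p0 B t).2)
          then B (sim θ p0 B t).2 else (B (sim θ p0 B t).2)ᶜ) then 1 else 0) := fun x => rfl
    have := step θ (sim θ p0 B t).1 (B (sim θ p0 B t).2) ih1 h2 (sim θ p0 B (t+1)).1 hq
    exact ⟨this.1, by omega⟩


/-- for any `ε > 0` and sufficiently large `n`: in an `n`-round coin game on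
3 coins in which `m` rounds have already been played (leaving positions `p0`), for any
Bob strategy `B` for the remaining `n - m` rounds, Eve has choices `e` guaranteeing
`posc_n(2) ≤ max ⌈(n - m + posc_m(1) + posc_m(2) + posc_m(3))/3⌉ (posc_m(2))`. -/
theorem stmt4 :
    ∀ ε : ℝ, 0 < ε → ∃ N : ℕ, ∀ n : ℕ, N ≤ n → ∀ m : ℕ, m ≤ n →
    ∀ p0 : Fin 3 → ℕ, ∀ B : List Bool → Finset (Fin 3), ∃ e : ℕ → Bool,
      (posc (play p0 B e (n - m)) 2 : ℤ) ≤
        max ⌈((n : ℚ) - m + posc p0 1 + posc p0 2 + posc p0 3) / 3⌉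
            ((posc p0 2 : ℤ)) := by
  intro ε hε
  refine ⟨0, fun n _ m hmn p0 B => ?_⟩
  set T : ℕ := n - m with hT
  set θi : ℤ := max ⌈((n : ℚ) - m + posc p0 1 + posc p0 2 + posc p0 3) / 3⌉
      ((posc p0 2 : ℤ)) with hθi
  have hθi0 : (posc p0 2 : ℤ) ≤ θi := le_max_right _ _
  set θ : ℕ := θi.toNat with hθ
  have hθeq : (θ : ℤ) = θi := Int.toNat_of_nonneg (le_trans (by positivity) hθi0)
  -- 3θ ≥ T + sum
  have hceil : ((T : ℚ) + posc p0 1 + posc p0 2 + posc p0 3) / 3 ≤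
      (⌈((n : ℚ) - m + posc p0 1 + posc p0 2 + posc p0 3) / 3⌉ : ℚ) := by
    have : ((T : ℚ)) = (n : ℚ) - m := by
      rw [hT]; push_cast [Nat.cast_sub hmn]; ring
    rw [this]
    exact Int.le_ceil _
  have hsum : (T : ℤ) + posc p0 1 + posc p0 2 + posc p0 3 ≤ 3 * θi := by
    have h3 : ((T : ℚ) + posc p0 1 + posc p0 2 + posc p0 3) ≤
        3 * (⌈((n : ℚ) - m + posc p0 1 + posc p0 2 + posc p0 3) / 3⌉ : ℚ) := by
      linarith
    have h4 : (⌈((n : ℚ) - m + posc p0 1 + posc p0 2 + posc p0 3) / 3⌉ : ℤ) ≤ θi :=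
      le_max_left _ _
    have h5 : ((T : ℤ) + posc p0 1 + posc p0 2 + posc p0 3 : ℤ) ≤
        3 * ⌈((n : ℚ) - m + posc p0 1 + posc p0 2 + posc p0 3) / 3⌉ := by
      exact_mod_cast h3
    linarith
  have hsumn : T + posc p0 1 + posc p0 2 + posc p0 3 ≤ 3 * θ := by
    have := hθeq
    omega
  -- initial invariant
  have hH0 : Hc θ p0 ≤ 1 := (Hc_iff θ p0).2 (by have := hθeq; omega)
  have hP0 : Phi θ p0 + T ≤ 3 * θ := by
    have hPle : Phi θ p0 ≤ p0 0 + p0 1 + p0 2 := by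
      unfold Phi; have := min_le_left (p0 0) (θ+1); have := min_le_left (p0 1) (θ+1);
        have := min_le_left (p0 2) (θ+1); omega
    have := sum_posc p0
    omega
  obtain ⟨hHT, _⟩ := invariant θ T p0 B hH0 hP0 T le_rfl
  refine ⟨eve θ p0 B, ?_⟩
  rw [← (sim_spec θ p0 B T).2]
  have : posc (sim θ p0 B T).1 2 ≤ θ := (Hc_iff θ _).1 hHT
  calc ((posc (sim θ p0 B T).1 2 : ℤ)) ≤ (θ : ℤ) := by exact_mod_cast this
    _ = θi := hθeq
end

section
/- With K = 2^{ℓ+1} - 1 coins and θ_ℓ := ceil(((2^ℓ-1)(n-m) + Σ_m)/(2^{ℓ+1}-1)), if Eve plays the 'smaller set' strategy from round m+1 to round T and at round T we have posc_T(1) = θ_ℓ + T - n, then posc_T(2) + ... + posc_T(2^ℓ) ≤ (2^{ℓ-1} - 1)·T - ((2^ℓ-1)/2)·m + (1/2)·(n + Σ_m - θ_ℓ). -/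
lemma sum_Ioc_shift (f : ℕ → ℕ) (b c d : ℕ) :
    ∑ j ∈ Finset.Ioc (b+d) (c+d), f j = ∑ j ∈ Finset.Ioc b c, f (j + d) := by
  rw [← Finset.map_add_right_Ioc, Finset.sum_map]
  rfl

/-- with `K = 2^(ℓ+1) - 1` coins, if from round `m+1` to `T` the total of
all positions grows by at most `2^ℓ - 1` per round (smaller-set strategy) and
`posc_T(1) = θ_ℓ + T - n` where `θ_ℓ = ⌈((2^ℓ-1)(n-m) + Σ_m)/(2^(ℓ+1)-1)⌉`, then
`posc_T(2) + ⋯ + posc_T(2^ℓ) ≤ (2^(ℓ-1)-1)·T - ((2^ℓ-1)/2)·m + (1/2)(n + Σ_m - θ_ℓ)`. -/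
theorem stmt8 (ℓ : ℕ) (hℓ : 2 ≤ ℓ) (pos : ℕ → Fin (2^(ℓ+1) - 1) → ℕ)
    (m T n : ℕ) (hmT : m ≤ T) (hTn : T ≤ n)
    (hsmall : ∀ t, m ≤ t → t < T →
      (∑ x, pos (t+1) x) ≤ (∑ x, pos t x) + (2^ℓ - 1))
    (θ : ℤ)
    (hθdef : θ = ⌈(((2^ℓ : ℚ) - 1) * ((n : ℚ) - m) + ∑ x, (pos m x : ℚ))
        / ((2^(ℓ+1) : ℚ) - 1)⌉)
    (hT1 : (posc (pos T) 1 : ℤ) = θ + T - n) :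
    (∑ i ∈ Finset.Icc 2 (2^ℓ), (posc (pos T) i : ℚ)) ≤
      ((2^(ℓ-1) : ℚ) - 1) * T - (((2^ℓ : ℚ) - 1) / 2) * m
        + (1/2) * ((n : ℚ) + (∑ x, (pos m x : ℚ)) - θ) := by
  have ha : 1 ≤ 2^ℓ := Nat.one_le_two_pow
  set a := 2^ℓ - 1 with haa
  have hK : 2^(ℓ+1) - 1 = 2*a + 1 := by
    have : 2^(ℓ+1) = 2 * 2^ℓ := by ring
    omega
  set l := (List.ofFn (pos T)).mergeSort (fun a b => decide (a ≤ b)) with hl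
  have hlen : l.length = 2*a + 1 := by
    rw [hl, List.length_mergeSort, List.length_ofFn, hK]
  have hsorted : l.Pairwise (· ≤ ·) := by
    have h := List.pairwise_mergeSort (le := fun a b : ℕ => decide (a ≤ b))
      (fun a b c hab hbc => by simp_all; omega)
      (fun a b => by simpa using Nat.le_total a b) (List.ofFn (pos T))
    exact List.Pairwise.imp (fun h => by simpa using h) h
  have hsum : l.sum = ∑ x, pos T x := by
    rw [hl, (List.mergeSort_perm _ _).sum_eq, List.sum_ofFn]
  set f : ℕ → ℕ := fun j => l.getD j 0 with hf
  have hposc : ∀ i, posc (pos T) i = f (i-1) := fun i => rfl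
  have hmono : ∀ i j, i ≤ j → j < l.length → f i ≤ f j := by
    intro i j hij hj
    rw [hf]
    simp only
    rw [List.getD_eq_get _ _ ⟨i, lt_of_le_of_lt hij hj⟩, List.getD_eq_get _ _ ⟨j, hj⟩]
    exact hsorted.rel_get_of_le hij
  -- total sum identity
  have hsumf : ∑ j ∈ Finset.range (2*a+1), f j = ∑ x, pos T x := by
    rw [← hsum]
    conv_rhs => rw [← List.ofFn_get l, List.sum_ofFn]
    rw [← hlen, ← Fin.sum_univ_eq_sum_range (fun j => f j) l.length]
    apply Finset.sum_congr rfl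
    intro i _
    rw [hf]
    exact List.getD_eq_get _ _ i
  -- reindex the goal sum
  have hre : ∑ i ∈ Finset.Icc 2 (2^ℓ), posc (pos T) i = ∑ j ∈ Finset.Ioc 0 a, f j := by
    have h2 : Finset.Icc 2 (2^ℓ) = Finset.Icc (1+1) (a+1) := by
      congr 1 <;> omega
    rw [h2, ← Finset.map_add_right_Icc, Finset.sum_map]
    rw [← Finset.Icc_add_one_left_eq_Ioc, zero_add]
    apply Finset.sum_congr rfl
    intro j _
    rw [hposc]
    simp [addRightEmbedding]
  -- pairing bound
  have hpair : ∑ j ∈ Finset.Ioc 0 a, f j ≤ ∑ j ∈ Finset.Ioc a (2*a), f j := by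
    rw [show (2*a) = a + a by ring, show Finset.Ioc a (a+a) = Finset.Ioc (0+a) (a+a) by norm_num,
      sum_Ioc_shift]
    apply Finset.sum_le_sum
    intro j hj
    simp only [Finset.mem_Ioc] at hj
    exact hmono j (j+a) (by omega) (by omega)
  -- assemble: f 0 + (two halves) = total
  have hsplit : f 0 + (∑ j ∈ Finset.Ioc 0 a, f j + ∑ j ∈ Finset.Ioc a (2*a), f j)
      = ∑ x, pos T x := by
    rw [Finset.sum_Ioc_consecutive _ (by omega) (by omega), ← hsumf]
    rw [show Finset.range (2*a+1) = Finset.Icc 0 (2*a) by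
      rw [Finset.range_eq_Ico, Finset.Ico_add_one_right_eq_Icc]]
    rw [← Finset.add_sum_erase _ _ (by simp : 0 ∈ Finset.Icc 0 (2*a)), Finset.Icc_erase_left]
  -- growth bound
  have hgrow : ∀ d, m + d ≤ T → ∑ x, pos (m+d) x ≤ (∑ x, pos m x) + a * d := by
    intro d
    induction d with
    | zero => simp
    | succ d ih =>
      intro h
      have h1 := hsmall (m+d) (by omega) (by omega)
      have h2 := ih (by omega)
      have : ∑ x, pos (m+(d+1)) x = ∑ x, pos (m+d+1) x := by ring_nf
      rw [this, Nat.mul_succ]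
      omega
  have hS : ∑ x, pos T x ≤ (∑ x, pos m x) + a * (T - m) := by
    have := hgrow (T-m) (by omega)
    rwa [Nat.add_sub_cancel' hmT] at this
  -- key nat inequality
  have hkey : 2 * (∑ i ∈ Finset.Icc 2 (2^ℓ), posc (pos T) i) + posc (pos T) 1
      ≤ (∑ x, pos m x) + a * (T - m) := by
    rw [hre, hposc, show (1:ℕ)-1 = 0 from rfl]
    omega
  -- pass to ℚ
  have hA : ((posc (pos T) 1 : ℚ)) = (θ : ℚ) + T - n := by
    exact_mod_cast congrArg (fun z : ℤ => (z : ℚ)) hT1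
  have hkeyQ : 2 * (∑ i ∈ Finset.Icc 2 (2^ℓ), (posc (pos T) i : ℚ)) + (posc (pos T) 1 : ℚ)
      ≤ (∑ x, (pos m x : ℚ)) + ((2^ℓ : ℚ) - 1) * ((T : ℚ) - m) := by
    have := hkey
    have hc : ((a : ℕ) : ℚ) = (2^ℓ : ℚ) - 1 := by
      rw [haa]; push_cast [Nat.cast_sub ha]; ring
    calc 2 * (∑ i ∈ Finset.Icc 2 (2^ℓ), (posc (pos T) i : ℚ)) + (posc (pos T) 1 : ℚ)
        = ((2 * (∑ i ∈ Finset.Icc 2 (2^ℓ), posc (pos T) i) + posc (pos T) 1 : ℕ) : ℚ) := by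
          push_cast; ring
      _ ≤ (((∑ x, pos m x) + a * (T - m) : ℕ) : ℚ) := by exact_mod_cast this
      _ = (∑ x, (pos m x : ℚ)) + ((2^ℓ : ℚ) - 1) * ((T : ℚ) - m) := by
          push_cast [Nat.cast_sub hmT, hc]; ring
  have h2pow : (2:ℚ)^ℓ = 2 * 2^(ℓ-1) := by
    rw [← pow_succ']
    congr 1
    omega
  rw [h2pow] at hkeyQ ⊢
  linarith [hkeyQ, hA]
end

section
/- For ℓ ≥ 2, n, m, T with m ≤ T ≤ n, and any integers Σ_m, θ_ℓ with θ_ℓ = ceil(((2^ℓ-1)(n-m) + Σ_m)/(2^{ℓ+1}-1)), the following arithmetic inequality holds: ceil( (1/(2^ℓ-1)) · ( (2^{ℓ-1}-1)(n-T) + (2^{ℓ-1}-1)T - ((2^ℓ-1)/2)m + (1/2)(n + Σ_m - θ_ℓ) ) ) ≤ θ_ℓ. -/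
/-- the key arithmetic step: for `ℓ ≥ 2`, `m ≤ T ≤ n`, `Σ_m ≥ 0` and
`θ_ℓ = ⌈((2^ℓ-1)(n-m) + Σ_m)/(2^(ℓ+1)-1)⌉`, we have
`⌈(1/(2^ℓ-1))·((2^(ℓ-1)-1)(n-T) + (2^(ℓ-1)-1)T - ((2^ℓ-1)/2)m + (1/2)(n + Σ_m - θ_ℓ))⌉
  ≤ θ_ℓ`. -/
theorem stmt9 (ℓ : ℕ) (hℓ : 2 ≤ ℓ) (n m T : ℕ) (hmT : m ≤ T) (hTn : T ≤ n)
    (Sm : ℤ) (hS : 0 ≤ Sm) (θ : ℤ)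
    (hθ : θ = ⌈(((2^ℓ : ℚ) - 1) * ((n : ℚ) - m) + (Sm : ℚ)) / ((2^(ℓ+1) : ℚ) - 1)⌉) :
    ⌈(1 / ((2^ℓ : ℚ) - 1)) *
        (((2^(ℓ-1) : ℚ) - 1) * ((n : ℚ) - T) + ((2^(ℓ-1) : ℚ) - 1) * T
          - (((2^ℓ : ℚ) - 1) / 2) * m
          + (1/2) * ((n : ℚ) + (Sm : ℚ) - (θ : ℚ)))⌉ ≤ θ := by
  have hℓ1 : ℓ - 1 + 1 = ℓ := by omega
  have hpow : (2:ℚ)^ℓ = 2 * 2^(ℓ-1) := by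
    conv_lhs => rw [← hℓ1]
    ring
  have hA : (4:ℚ) ≤ 2^ℓ := by
    calc (4:ℚ) = 2^2 := by norm_num
    _ ≤ 2^ℓ := pow_le_pow_right₀ (by norm_num) hℓ
  have hq : (0:ℚ) < 2^ℓ - 1 := by linarith
  have h21 : (2:ℚ)^(ℓ+1) = 2 * 2^ℓ := by ring
  have h2q : (0:ℚ) < 2^(ℓ+1) - 1 := by rw [h21]; linarith
  have hX : ((2^ℓ:ℚ) - 1) * ((n:ℚ) - m) + (Sm:ℚ) ≤ ((2^(ℓ+1):ℚ) - 1) * θ := by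
    have h := Int.le_ceil ((((2^ℓ : ℚ) - 1) * ((n : ℚ) - m) + (Sm : ℚ)) / ((2^(ℓ+1) : ℚ) - 1))
    rw [← hθ, div_le_iff₀ h2q] at h
    linarith [h]
  rw [h21, hpow] at hX
  rw [Int.ceil_le, hpow, one_div, ← div_eq_inv_mul,
    div_le_iff₀ (by rw [← hpow]; exact hq)]
  nlinarith [hX]
end

section
/- In the parity coin game, suppose after round m = 62q we have posc_m(1) ≤ 20q + εq, posc_m(2) ≤ 26q + εq, posc_m(3) ≤ 28q + εq, posc_m(4) ≤ 30q + εq, posc_m(5) ≤ 30q + εq, and for the next 2q rounds the even coins are selected. Then for every even d with 0 ≤ d ≤ 2q, posc_{m+d}(5) ≤ 30q + d/2 + εq; in particular posc_{64q}(4) ≤ 31q + εq and posc_{64q}(5) ≤ 31q + εq. -/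
/-- One round of the parity coin game: if `b = true` all even-indexed coins move up by 1,
otherwise all odd-indexed coins do. -/
def ParityStep {K : ℕ} (b : Bool) (p p' : Fin K → ℕ) : Prop :=
  ∀ x : Fin K, p' x = p x + (if x.val % 2 = (if b then 0 else 1) then 1 else 0)

lemma sorted_getD_le (l : List ℕ) (hs : List.Pairwise (fun a b : ℕ => a ≤ b) l) (n v : ℕ)
    (h : n < (l.filter (fun a => decide (a ≤ v))).length) : l.getD n 0 ≤ v := by
  have hlen : n < l.length := lt_of_lt_of_le h (List.length_filter_le _ _)
  rw [List.getD_eq_getElem l 0 hlen]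
  by_contra hc
  push_neg at hc
  have hpw := List.pairwise_iff_getElem.mp hs
  have hdrop : ∀ a ∈ l.drop n, ¬ (a ≤ v) := by
    intro a ha
    rw [List.mem_iff_getElem] at ha
    obtain ⟨j, hj, rfl⟩ := ha
    rw [List.length_drop] at hj
    rw [List.getElem_drop]
    intro hav
    rcases Nat.eq_zero_or_pos j with rfl | hj0
    · have he : l[n + 0] = l[n] := by simp
      omega
    · have h3 : l[n] ≤ l[n+j] := hpw n (n+j) hlen (by omega) (by omega)
      omega
  have hz : (l.drop n).countP (fun a => decide (a ≤ v)) = 0 :=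
    List.countP_eq_zero.mpr (by intro a ha; simpa using hdrop a ha)
  have hsplit : l.countP (fun a => decide (a ≤ v))
      = (l.take n).countP (fun a => decide (a ≤ v)) + (l.drop n).countP (fun a => decide (a ≤ v)) := by
    rw [← List.countP_append, List.take_append_drop]
  have h1 : (l.take n).countP (fun a => decide (a ≤ v)) ≤ (l.take n).length := List.countP_le_length
  have h2 : (l.take n).length ≤ n := by simp
  rw [← List.countP_eq_length_filter] at h
  omega

lemma posc_le_of_card {K : ℕ} (p : Fin K → ℕ) (i v : ℕ)
    (h : i ≤ ((List.ofFn p).filter (fun a => decide (a ≤ v))).length) (hi : 1 ≤ i) :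
    posc p i ≤ v := by
  unfold posc
  have hperm := List.mergeSort_perm (List.ofFn p) (fun a b => decide (a ≤ b))
  have hs := List.pairwise_mergeSort (le := fun a b : ℕ => decide (a ≤ b))
    (by intro a b c hab hbc; simp_all; omega) (by intro a b; simpa using le_total a b) (List.ofFn p)
  apply sorted_getD_le _ (hs.imp (by simp))
  have hcp : ((List.ofFn p).mergeSort (fun a b => decide (a ≤ b))).countP (fun a => decide (a ≤ v))
      = (List.ofFn p).countP (fun a => decide (a ≤ v)) := hperm.countP_eq _
  rw [← List.countP_eq_length_filter, hcp, List.countP_eq_length_filter]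
  omega

lemma posc_le_of_forall {K : ℕ} (p : Fin K → ℕ) (i v : ℕ) (h : ∀ x, p x ≤ v) : posc p i ≤ v := by
  unfold posc
  rcases lt_or_ge (i-1) ((List.ofFn p).mergeSort (fun a b => decide (a ≤ b))).length with hl | hl
  · rw [List.getD_eq_getElem _ _ hl]
    have hm := List.getElem_mem hl
    rw [(List.mergeSort_perm _ _).mem_iff, List.mem_ofFn] at hm
    obtain ⟨x, hx⟩ := hm
    rw [← hx]; exact h x
  · rw [List.getD_eq_default _ _ hl]; exact Nat.zero_le v

lemma le_posc_one {K : ℕ} (p : Fin K → ℕ) (v : ℕ) (hK : 0 < K) (h : ∀ x, v ≤ p x) :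
    v ≤ posc p 1 := by
  unfold posc
  have hl : 0 < ((List.ofFn p).mergeSort (fun a b => decide (a ≤ b))).length := by
    rw [List.length_mergeSort, List.length_ofFn]; exact hK
  rw [show (1:ℕ)-1 = 0 from rfl, List.getD_eq_getElem _ _ hl]
  have hm := List.getElem_mem hl
  rw [(List.mergeSort_perm _ _).mem_iff, List.mem_ofFn] at hm
  obtain ⟨x, hx⟩ := hm
  rw [← hx]; exact h x

lemma count_parity (r n : ℕ) (hr : r < 2) :
    (List.range n).countP (fun m => decide (m % 2 = r)) = (n + 1 - r) / 2 := by
  induction n with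
  | zero => simp; omega
  | succ n ih =>
    rw [List.range_succ, List.countP_append, ih]
    by_cases hp : n % 2 = r
    · simp [hp]; omega
    · simp [hp]; omega

lemma filter_ge {K : ℕ} (p : Fin K → ℕ) (v r : ℕ) (hr : r < 2)
    (hp : ∀ x : Fin K, x.val % 2 = r → p x ≤ v) :
    K / 2 ≤ ((List.ofFn p).filter (fun a => decide (a ≤ v))).length := by
  rw [← List.countP_eq_length_filter, List.ofFn_eq_map, List.countP_map]
  have h1 : (List.finRange K).countP (fun x => decide (x.val % 2 = r))
      ≤ (List.finRange K).countP ((fun a => decide (a ≤ v)) ∘ p) := by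
    apply List.countP_mono_left
    intro x _ hx
    simp only [Function.comp, decide_eq_true_eq] at *
    exact hp x hx
  have h2 : (List.finRange K).countP (fun x => decide (x.val % 2 = r)) = (K + 1 - r) / 2 := by
    have h3 : (List.finRange K).countP (fun x : Fin K => decide (x.val % 2 = r))
        = ((List.finRange K).map Fin.val).countP (fun m => decide (m % 2 = r)) := by
      rw [List.countP_map]; rfl
    rw [h3, List.map_coe_finRange_eq_range, count_parity r K hr]
  omega

/-- in the parity coin game on `K = 2^k` coins (`2^k > 1000/ε`, `q` a
positive even integer with `εq` an integer), if after round `m = 62q` we have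
`posc_m(1) ≤ 20q + εq`, `posc_m(2) ≤ 26q + εq`, `posc_m(3) ≤ 28q + εq`,
`posc_m(4) ≤ 30q + εq`, `posc_m(5) ≤ 30q + εq`, and the even coins are selected for the
next `2q` rounds, then for every even `d ≤ 2q`, `posc_{m+d}(5) ≤ 30q + d/2 + εq`;
in particular `posc_{64q}(4) ≤ 31q + εq` and `posc_{64q}(5) ≤ 31q + εq`. -/
theorem stmt15 (k q : ℕ) (hq : 0 < q) (hqe : Even q) (ε : ℚ) (hε : 0 < ε)
    (hεq : ∃ z : ℤ, (z : ℚ) = ε * q) (hk : (2^k : ℚ) > 1000 / ε)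
    (e : ℕ → Bool) (pos : ℕ → Fin (2^k) → ℕ)
    (h0 : ∀ x, pos 0 x = 0)
    (hstep : ∀ t, ParityStep (e t) (pos t) (pos (t+1)))
    (h1 : (posc (pos (62 * q)) 1 : ℚ) ≤ 20 * q + ε * q)
    (h2 : (posc (pos (62 * q)) 2 : ℚ) ≤ 26 * q + ε * q)
    (h3 : (posc (pos (62 * q)) 3 : ℚ) ≤ 28 * q + ε * q)
    (h4 : (posc (pos (62 * q)) 4 : ℚ) ≤ 30 * q + ε * q)
    (h5 : (posc (pos (62 * q)) 5 : ℚ) ≤ 30 * q + ε * q)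
    (heven : ∀ t, 62 * q ≤ t → t < 64 * q → e t = true) :
    (∀ d : ℕ, Even d → d ≤ 2 * q →
        (posc (pos (62 * q + d)) 5 : ℚ) ≤ 30 * q + (d : ℚ) / 2 + ε * q)
    ∧ (posc (pos (64 * q)) 4 : ℚ) ≤ 31 * q + ε * q
    ∧ (posc (pos (64 * q)) 5 : ℚ) ≤ 31 * q + ε * q := by
  have hq1 : (1 : ℚ) ≤ (q : ℚ) := by exact_mod_cast hq
  -- positions depend only on parity
  have hpar : ∀ t (x y : Fin (2^k)), x.val % 2 = y.val % 2 → pos t x = pos t y := by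
    intro t
    induction t with
    | zero => intro x y _; rw [h0, h0]
    | succ t ih => intro x y hxy; rw [hstep t x, hstep t y, ih x y hxy, hxy]
  have hle : ∀ t (x : Fin (2^k)), pos t x ≤ t := by
    intro t
    induction t with
    | zero => intro x; rw [h0]
    | succ t ih => intro x; rw [hstep t x]; have := ih x; split <;> split <;> omega
  by_cases hk4 : 4 ≤ k
  · -- big case: at least 8 coins of each parity
    have hK16 : 16 ≤ 2 ^ k := by
      calc (16 : ℕ) = 2 ^ 4 := by norm_num
      _ ≤ 2 ^ k := Nat.pow_le_pow_right (by norm_num) hk4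
    obtain ⟨i0, hi0v⟩ : ∃ x : Fin (2^k), x.val = 0 := ⟨⟨0, by omega⟩, rfl⟩
    obtain ⟨i1, hi1v⟩ : ∃ x : Fin (2^k), x.val = 1 := ⟨⟨1, by omega⟩, rfl⟩
    have hi0 : i0.val % 2 = 0 := by rw [hi0v]
    have hi1 : i1.val % 2 = 1 := by rw [hi1v]
    set a := pos (62 * q) i0 with ha
    set b := pos (62 * q) i1 with hb
    -- the minimum of a,b is at most posc 1
    have hminposc : min a b ≤ posc (pos (62 * q)) 1 := by
      apply le_posc_one _ _ (by omega)
      intro x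
      rcases Nat.mod_two_eq_zero_or_one x.val with hx | hx
      · rw [hpar (62*q) x i0 (by omega)]; exact min_le_left _ _
      · rw [hpar (62*q) x i1 (by omega)]; exact min_le_right _ _
    have hminq : ((min a b : ℕ) : ℚ) ≤ 20 * q + ε * q := by
      calc ((min a b : ℕ) : ℚ) ≤ (posc (pos (62 * q)) 1 : ℕ) := by exact_mod_cast hminposc
      _ ≤ 20 * q + ε * q := h1
    -- evolution over the next 2q rounds
    have hevol : ∀ d, d ≤ 2 * q → pos (62*q + d) i0 = a + d ∧ pos (62*q + d) i1 = b := by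
      intro d
      induction d with
      | zero => intro _; simp [ha, hb]
      | succ d ih =>
        intro hd
        obtain ⟨u0, u1⟩ := ih (by omega)
        have he : e (62*q + d) = true := heven _ (by omega) (by omega)
        have hs0 := hstep (62*q + d) i0
        have hs1 := hstep (62*q + d) i1
        rw [he] at hs0 hs1
        simp only [if_true, hi0, hi1] at hs0 hs1
        constructor
        · rw [show 62*q + (d+1) = (62*q+d) + 1 by omega, hs0]
          simp [u0]; omega
        · rw [show 62*q + (d+1) = (62*q+d) + 1 by omega, hs1]
          simp [u1]
    -- key bound on posc i at time 62q+d
    have key : ∀ i, 1 ≤ i → i ≤ 5 → ∀ d, d ≤ 2 * q →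
        posc (pos (62*q + d)) i ≤ min a b + d := by
      intro i hi1' hi5 d hd
      obtain ⟨u0, u1⟩ := hevol d hd
      rcases le_or_gt (a + d) b with hab | hab
      · -- even coins are the low class
        apply posc_le_of_card _ _ (min a b + d) _ hi1'
        have hcard := filter_ge (pos (62*q+d)) (min a b + d) 0 (by omega) ?_
        · omega
        · intro x hx
          rw [hpar (62*q+d) x i0 (by omega), u0]
          omega
      · -- odd coins are the low class
        apply posc_le_of_card _ _ (min a b + d) _ hi1'
        have hcard := filter_ge (pos (62*q+d)) (min a b + d) 1 (by omega) ?_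
        · omega
        · intro x hx
          rw [hpar (62*q+d) x i1 (by omega), u1]
          omega
    have keyQ : ∀ i, 1 ≤ i → i ≤ 5 → ∀ d, d ≤ 2 * q →
        (posc (pos (62*q + d)) i : ℚ) ≤ 20 * q + ε * q + d := by
      intro i hi1' hi5 d hd
      have h := key i hi1' hi5 d hd
      have h' : ((posc (pos (62*q + d)) i : ℕ) : ℚ) ≤ ((min a b + d : ℕ) : ℚ) := by exact_mod_cast h
      rw [Nat.cast_add] at h'
      linarith
    refine ⟨?_, ?_, ?_⟩
    · intro d _ hd
      have h := keyQ 5 (by norm_num) (by norm_num) d hd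
      have hd2 : (d : ℚ) ≤ 2 * q := by exact_mod_cast hd
      linarith
    · have h := keyQ 4 (by norm_num) (by norm_num) (2*q) le_rfl
      rw [show 64 * q = 62 * q + 2 * q by omega]
      have : ((2*q : ℕ) : ℚ) = 2 * q := by push_cast; ring
      rw [this] at h
      linarith
    · have h := keyQ 5 (by norm_num) (by norm_num) (2*q) le_rfl
      rw [show 64 * q = 62 * q + 2 * q by omega]
      have : ((2*q : ℕ) : ℚ) = 2 * q := by push_cast; ring
      rw [this] at h
      linarith
  · -- small case: k ≤ 3, so ε > 125 and everything is trivial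
    have hpow : ((2:ℚ) ^ k) ≤ 8 := by
      have : k ≤ 3 := by omega
      calc ((2:ℚ) ^ k) ≤ 2 ^ 3 := by
            apply pow_le_pow_right₀ (by norm_num) this
      _ = 8 := by norm_num
    have hε125 : (125 : ℚ) < ε := by
      have h8 : 1000 / ε < 8 := lt_of_lt_of_le hk hpow
      rw [div_lt_iff₀ hε] at h8
      nlinarith
    have htriv : ∀ t i, (posc (pos t) i : ℚ) ≤ (t : ℚ) := by
      intro t i
      have := posc_le_of_forall (pos t) i t (hle t)
      exact_mod_cast this
    refine ⟨?_, ?_, ?_⟩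
    · intro d _ hd
      have h := htriv (62*q + d) 5
      have hdq : (d : ℚ) ≤ 2 * q := by exact_mod_cast hd
      have hc : ((62*q + d : ℕ) : ℚ) = 62 * q + d := by push_cast; ring
      rw [hc] at h
      have hd0 : (0:ℚ) ≤ (d:ℚ) := by positivity
      nlinarith
    · have h := htriv (64*q) 4
      have hc : ((64*q : ℕ) : ℚ) = 64 * q := by push_cast; ring
      rw [hc] at h
      nlinarith
    · have h := htriv (64*q) 5
      have hc : ((64*q : ℕ) : ℚ) = 64 * q := by push_cast; ring
      rw [hc] at h
      nlinarith
end

section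
/- In the coin game where Eve always chooses the set with fewer elements among Bob's two partition sets of K coins, after any m rounds the sum of all coin positions is at most floor(K/2) · m, and hence the i-th smallest position satisfies posc_m(i) ≤ floor(K/2) · m / (K - i + 1) for every i ∈ [K]. -/
lemma key_sorted (l : List ℕ) (hl : l.Pairwise (· ≤ ·)) (j : ℕ) (hj : j < l.length) :
    (l.length - j) * l.getD j 0 ≤ l.sum := by
  have hall : ∀ x ∈ l.drop j, l[j] ≤ x := by
    intro x hx
    obtain ⟨k, hk, rfl⟩ := List.getElem_of_mem hx
    rw [List.length_drop] at hk
    rw [List.getElem_drop]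
    exact hl.rel_get_of_le (a := ⟨j, hj⟩) (b := ⟨j + k, by omega⟩) (by simp [Fin.le_def])
  have h1 := List.card_nsmul_le_sum (l.drop j) l[j] hall
  rw [List.length_drop, smul_eq_mul] at h1
  have h2 : (l.drop j).sum ≤ l.sum := by
    conv_rhs => rw [← List.take_append_drop j l]
    rw [List.sum_append]
    omega
  rw [List.getD_eq_getElem l 0 hj]
  omega
/-- in the coin game with `K` coins where Eve always chooses the smaller
of Bob's two partition sets, after any `m` rounds the sum of all positions is at most
`⌊K/2⌋·m`, and hence `posc_m(i) ≤ ⌊K/2⌋·m / (K - i + 1)` for every `i ∈ [K]`. -/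
theorem stmt17 (K : ℕ) (hK : 0 < K) (S : ℕ → Finset (Fin K)) (c : ℕ → Bool)
    (pos : ℕ → Fin K → ℕ)
    (h0 : ∀ x, pos 0 x = 0)
    (hstep : ∀ t x, pos (t+1) x
      = pos t x + (if x ∈ (if c t then S t else (S t)ᶜ) then 1 else 0))
    (hsmall : ∀ t, (if c t then S t else (S t)ᶜ).card ≤ (if c t then (S t)ᶜ else S t).card) :
    ∀ m : ℕ, (∑ x, pos m x) ≤ (K / 2) * m
      ∧ ∀ i : ℕ, 1 ≤ i → i ≤ K →
          (posc (pos m) i : ℚ) ≤ ((K / 2 : ℕ) : ℚ) * m / ((K : ℚ) - i + 1) := by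
  have hsum : ∀ m, (∑ x, pos m x) ≤ (K / 2) * m := by
    intro m
    induction m with
    | zero => simp [h0]
    | succ n ih =>
      have hcard : (if c n then S n else (S n)ᶜ).card ≤ K / 2 := by
        have h := hsmall n
        have h2 : (if c n then S n else (S n)ᶜ).card + (if c n then (S n)ᶜ else S n).card = K := by
          cases c n <;> simp [Finset.card_compl, Finset.card_univ] <;>
            have := Finset.card_le_univ (S n) <;> simp_all [Finset.card_univ] <;> omega
        omega
      have : (∑ x, pos (n+1) x)
          = (∑ x, pos n x) + (if c n then S n else (S n)ᶜ).card := by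
        simp only [hstep n]
        rw [Finset.sum_add_distrib]
        congr 1
        rw [Finset.sum_ite_mem, Finset.univ_inter, Finset.card_eq_sum_ones]
      rw [this]
      calc (∑ x, pos n x) + (if c n then S n else (S n)ᶜ).card
          ≤ K / 2 * n + K / 2 := add_le_add ih hcard
        _ = K / 2 * (n + 1) := by ring
  intro m
  refine ⟨hsum m, fun i hi1 hiK => ?_⟩
  set l := (List.ofFn (pos m)).mergeSort (fun a b => decide (a ≤ b)) with hl
  have hsorted : l.Pairwise (· ≤ ·) := by
    have := List.pairwise_mergeSort (le := fun a b : ℕ => decide (a ≤ b))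
      (fun a b c h1 h2 => by simp_all; omega)
      (fun a b => by simpa using Nat.le_total a b) (List.ofFn (pos m))
    simpa [List.Pairwise, List.Pairwise, hl] using this
  have hlen : l.length = K := by
    rw [hl, List.length_mergeSort, List.length_ofFn]
  have hlsum : l.sum = ∑ x, pos m x := by
    rw [hl, List.Perm.sum_eq (List.mergeSort_perm _ _), List.sum_ofFn]
  have hj : i - 1 < l.length := by omega
  have hkey := key_sorted l hsorted (i-1) hj
  have hnat : (K - i + 1) * posc (pos m) i ≤ K / 2 * m := by
    have : posc (pos m) i = l.getD (i-1) 0 := rfl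
    rw [this]
    have : l.length - (i-1) = K - i + 1 := by omega
    rw [this, hlsum] at hkey
    exact hkey.trans (hsum m)
  have hpos : (0:ℚ) < (K : ℚ) - i + 1 := by
    have : (i:ℚ) ≤ K := by exact_mod_cast hiK
    linarith
  rw [le_div_iff₀ hpos]
  have hcast : ((K:ℚ) - i + 1) = ((K - i + 1 : ℕ) : ℚ) := by
    push_cast [Nat.cast_sub hiK]
    ring
  rw [hcast]
  calc (posc (pos m) i : ℚ) * ((K - i + 1 : ℕ) : ℚ)
      = (((K - i + 1) * posc (pos m) i : ℕ) : ℚ) := by push_cast; ring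
    _ ≤ (((K/2) * m : ℕ) : ℚ) := by exact_mod_cast hnat
    _ = ((K/2 : ℕ) : ℚ) * m := by push_cast; ring
end

section
/- For any positive integer ℓ, if Eve can guarantee in every sufficiently long n-round coin game on K coins (K sufficiently large) that ℓ + 1 coins end with position at most r·n, then no (ℓ, r)-list feedback code exists: for every Bob encoding strategy with feedback and every decoder outputting lists of size ℓ, there exist a message and an adversarial corruption pattern flipping at most r·n bits such that the decoded list omits the message. -/
/-- if for all sufficiently large `K` and all sufficiently long `n`-round
coin games on `K` coins Eve can guarantee that at least `ℓ + 1` coins end with position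
at most `r·n`, then no `(ℓ, r)`-list feedback code exists: for all sufficiently large
message length `k` and block length `n`, for every feedback encoder
`Enc : message → received-history → next bit` and every decoder `Dec` outputting lists of
size at most `ℓ`, there are a message `x` and a received word `recv` differing from the
sent word in at most `r·n` positions such that `x ∉ Dec recv`. -/
theorem stmt19 (ℓ : ℕ) (hℓ : 1 ≤ ℓ) (r : ℚ)
    (hEve : ∃ K₀ N : ℕ, ∀ K : ℕ, K₀ ≤ K → ∀ n : ℕ, N ≤ n →
      ∀ B : List Bool → Finset (Fin K), ∃ e : ℕ → Bool,
        ℓ + 1 ≤ (Finset.univ.filter fun x : Fin K =>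
          (play (fun _ => 0) B e n x : ℚ) ≤ r * n).card) :
    ∃ k₀ n₀ : ℕ, ∀ k : ℕ, k₀ ≤ k → ∀ n : ℕ, n₀ ≤ n →
      ∀ Enc : (Fin k → Bool) → List Bool → Bool,
      ∀ Dec : List Bool → Finset (Fin k → Bool),
        (∀ w : List Bool, (Dec w).card ≤ ℓ) →
        ∃ (x : Fin k → Bool) (recv : ℕ → Bool),
          (((Finset.range n).filter
              (fun t => Enc x ((List.range t).map recv) ≠ recv t)).card : ℚ) ≤ r * n
          ∧ x ∉ Dec ((List.range n).map recv) := by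
  obtain ⟨K₀, N, hE⟩ := hEve
  refine ⟨K₀, N, ?_⟩
  intro k hk n hn Enc Dec hDec
  set K := Fintype.card (Fin k → Bool) with hKdef
  have hKcard : K = 2 ^ k := by simp [hKdef]
  have hK : K₀ ≤ K := le_trans hk (hKcard ▸ (Nat.lt_two_pow_self (n := k)).le)
  let eqv : (Fin k → Bool) ≃ Fin K := Fintype.equivFin _
  let B : List Bool → Finset (Fin K) :=
    fun h => Finset.univ.filter fun y => Enc (eqv.symm y) h = false
  obtain ⟨e, he⟩ := hE K hK n hn B
  have key : ∀ t (x : Fin k → Bool),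
      play (fun _ => 0) B e t (eqv x)
        = ((Finset.range t).filter fun s => Enc x ((List.range s).map e) ≠ e s).card := by
    intro t x
    induction t with
    | zero => simp [play]
    | succ t ih =>
      have hsplit : play (fun _ => 0) B e (t+1) (eqv x)
          = play (fun _ => 0) B e t (eqv x) +
            (if eqv x ∈ (if e t then B ((List.range t).map e)
                         else (B ((List.range t).map e))ᶜ) then 1 else 0) := rfl
      have hM : (eqv x ∈ (if e t then B ((List.range t).map e)
            else (B ((List.range t).map e))ᶜ)) ↔ Enc x ((List.range t).map e) ≠ e t := by
        cases hb : e t <;> simp [B, hb]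
      rw [hsplit, ih, Finset.range_add_one, Finset.filter_insert]
      by_cases hcond : Enc x ((List.range t).map e) ≠ e t
      · rw [if_pos hcond, Finset.card_insert_of_notMem (by simp),
          if_pos (hM.mpr hcond)]
      · rw [if_neg hcond, if_neg (fun hm => hcond (hM.mp hm)), Nat.add_zero]
  set w := (List.range n).map e with hw
  set S := Finset.univ.filter
    (fun x : Fin K => (play (fun _ => 0) B e n x : ℚ) ≤ r * n) with hS
  let T := S.image eqv.symm
  have hT : ℓ + 1 ≤ T.card := by
    rw [Finset.card_image_of_injective _ eqv.symm.injective]; exact he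
  have hne : (T \ Dec w).Nonempty := by
    rw [← Finset.card_pos]
    have h1 := Finset.le_card_sdiff (Dec w) T
    have h2 := hDec w
    omega
  obtain ⟨x, hx⟩ := hne
  rw [Finset.mem_sdiff] at hx
  obtain ⟨hxT, hxD⟩ := hx
  refine ⟨x, e, ?_, hxD⟩
  obtain ⟨y, hyS, hyx⟩ := Finset.mem_image.mp hxT
  have hy : eqv x = y := by rw [← hyx]; simp
  have := (Finset.mem_filter.mp hyS).2
  rw [← hy] at this
  rw [key n x] at this
  exact this
end
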